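/- Löwdin's symmetric orthogonalization minimizes the Frobenius distance to the original matrix among all orthogonal matrices: for invertible U ∈ ℝ^{n×n} with polar decomposition U = QP (Q orthogonal, P symmetric positive definite), for every orthogonal matrix R, ‖U − Q‖_F ≤ ‖U − R‖_F. -/

import Mathlib

open Matrix Finset

noncomputable def frobNorm {n : ℕ} (A : Matrix (Fin n) (Fin n) ℝ) : ℝ :=
  Real.sqrt (∑ i, ∑ j, A i j ^ 2)

open scoped MatrixOrder in
lemma trace_orth_mul_posdef {n : ℕ} (S P : Matrix (Fin n) (Fin n) ℝ)
    (hS : Sᵀ * S = 1) (hP : P.PosDef) (hPsymm : Pᵀ = P) :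
    (S * P).trace ≤ P.trace := by
  have hPsd := hP.posSemidef
  set M := CFC.sqrt P with hM
  have hMM : M * M = P := CFC.sqrt_mul_sqrt_self P hPsd.nonneg
  have hMsymm : Mᵀ = M := (CFC.sqrt_nonneg P).posSemidef.1
  have hSS : S * Sᵀ = 1 := mul_eq_one_comm.mp hS
  have hMs : ∀ a b, M a b = M b a := fun a b => by rw [show M a b = Mᵀ b a from rfl, hMsymm]
  have key : ∀ i, (M * S * M) i i ≤ P i i := by
    intro i
    set x : Fin n → ℝ := fun k => M i k with hx
    set y : Fin n → ℝ := Sᵀ.mulVec x with hy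
    have hentry : (M * S * M) i i = ∑ k, y k * x k := by
      simp only [mul_apply, hy, hx, Matrix.mulVec, dotProduct, transpose_apply,
        Finset.sum_mul]
      apply Finset.sum_congr rfl; intro k _
      apply Finset.sum_congr rfl; intro j _
      rw [hMs k i]; ring
    have hnorm : ∑ k, y k ^ 2 = ∑ k, x k ^ 2 := by
      have : y ⬝ᵥ y = x ⬝ᵥ x := by
        rw [hy, Matrix.dotProduct_mulVec, Matrix.vecMul_transpose, Matrix.mulVec_mulVec,
          hSS, Matrix.one_mulVec]
      simpa [dotProduct, sq] using this
    have hcs : (∑ k, y k * x k) ^ 2 ≤ (∑ k, y k ^ 2) * (∑ k, x k ^ 2) :=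
      Finset.sum_mul_sq_le_sq_mul_sq _ _ _
    have hxx : 0 ≤ ∑ k, x k ^ 2 := Finset.sum_nonneg fun _ _ => sq_nonneg _
    have : (∑ k, y k * x k) ≤ ∑ k, x k ^ 2 := by
      nlinarith [hcs, hnorm, hxx, sq_nonneg (∑ k, y k * x k - ∑ k, x k ^ 2)]
    have hPii : P i i = ∑ k, x k ^ 2 := by
      rw [← hMM]; simp only [mul_apply, hx]
      apply Finset.sum_congr rfl; intro k _
      rw [hMs k i, sq]
    rw [hentry, hPii]; exact this
  have : (S * P).trace = (M * S * M).trace := by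
    rw [← hMM, ← mul_assoc, Matrix.trace_mul_comm, ← mul_assoc]
  rw [this]
  exact Finset.sum_le_sum fun i _ => key i

/-- The orthogonal polar factor `Q` of an invertible matrix `U = QP` (with `P` symmetric
positive definite) is the closest orthogonal matrix to `U` in Frobenius norm. -/
theorem stmt14 {n : ℕ} (U Q P : Matrix (Fin n) (Fin n) ℝ)
    (hU : IsUnit U) (hQ : Qᵀ * Q = 1) (hP : P.PosDef) (hPsymm : Pᵀ = P)
    (hpolar : U = Q * P) :
    ∀ R : Matrix (Fin n) (Fin n) ℝ, Rᵀ * R = 1 →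
      frobNorm (U - Q) ≤ frobNorm (U - R) := by
  intro R hR
  have expand : ∀ A : Matrix (Fin n) (Fin n) ℝ, Aᵀ * A = 1 →
      ∑ i, ∑ j, (U - A) i j ^ 2
        = (Uᵀ * U).trace + (n : ℝ) - 2 * (Aᵀ * U).trace := by
    intro A hA
    have h1 : ∑ i, ∑ j, (U - A) i j ^ 2 = ((U - A)ᵀ * (U - A)).trace := by
      rw [Matrix.trace]
      rw [Finset.sum_comm]
      congr 1; ext i
      simp [Matrix.mul_apply, Matrix.diag, sq]
    rw [h1]
    have : (U - A)ᵀ * (U - A) = Uᵀ * U - Uᵀ * A - Aᵀ * U + Aᵀ * A := by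
      rw [Matrix.transpose_sub]; noncomm_ring
    rw [this, Matrix.trace_add, Matrix.trace_sub, Matrix.trace_sub, hA, Matrix.trace_one]
    have : (Uᵀ * A).trace = (Aᵀ * U).trace := by
      rw [← Matrix.trace_transpose (Uᵀ * A), Matrix.transpose_mul, Matrix.transpose_transpose]
    rw [this]
    simp
    ring
  have hkey : (Rᵀ * U).trace ≤ (Qᵀ * U).trace := by
    have hQQ : (Qᵀ * U).trace = P.trace := by
      rw [hpolar, ← mul_assoc, hQ, one_mul]
    have hS : ((Rᵀ * Q)ᵀ * (Rᵀ * Q)) = 1 := by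
      rw [Matrix.transpose_mul, Matrix.transpose_transpose, mul_assoc, ← mul_assoc R,
        mul_eq_one_comm.mp hR, one_mul, hQ]
    have : (Rᵀ * U).trace = ((Rᵀ * Q) * P).trace := by rw [hpolar, mul_assoc]
    rw [this, hQQ]
    exact trace_orth_mul_posdef _ _ hS hP hPsymm
  unfold frobNorm
  apply Real.sqrt_le_sqrt
  rw [expand Q hQ, expand R hR]
  linarith
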